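/- arXiv:2205.06184 — 4 statements merged into one kernel-verified Lean document; each statement's English description precedes it below -/
import Mathlib

section
/- Let (P1, {,}_1, ∙1) and (P2, {,}_2, ∙2) be Poisson superalgebras with even linear maps ρ1, φ1: P1 → End(P2) and ρ2, φ2: P2 → End(P1) such that (P1,P2,ρ1,ρ2) is a matched pair of Lie superalgebras, (P1,P2,φ1,φ2) is a matched pair of commutative associative superalgebras, (P2,ρ1,φ1) and (P1,ρ2,φ2) are representations of P1 and P2 respectively, and compatibility conditions (15)-(18) hold. Then P1 ⊕ P2 with the combined bracket and product is a Poisson superalgebra containing P1 and P2 as subsuperalgebras. -/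
/-- The Koszul sign `(-1)^{ij}` for parities `i j : ZMod 2`. -/
def sgn (K : Type) [Field K] (i j : ZMod 2) : K := (-1 : K) ^ (i.val * j.val)

/-- Poisson superalgebra axioms for bundled bilinear operations. -/
def PoissonAxB {K A : Type} [Field K] [AddCommGroup A] [Module K A]
    (𝒜 : ZMod 2 → Submodule K A) (br mu : A →ₗ[K] A →ₗ[K] A) : Prop :=
  (∀ i j, ∀ x ∈ 𝒜 i, ∀ y ∈ 𝒜 j, br x y ∈ 𝒜 (i+j)) ∧
  (∀ i j, ∀ x ∈ 𝒜 i, ∀ y ∈ 𝒜 j, mu x y ∈ 𝒜 (i+j)) ∧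
  (∀ i j, ∀ x ∈ 𝒜 i, ∀ y ∈ 𝒜 j, br x y = - (sgn K i j) • br y x) ∧
  (∀ i j k, ∀ x ∈ 𝒜 i, ∀ y ∈ 𝒜 j, ∀ z ∈ 𝒜 k,
    sgn K i k • br x (br y z) + sgn K k j • br z (br x y)
      + sgn K j i • br y (br z x) = 0) ∧
  (∀ i j, ∀ x ∈ 𝒜 i, ∀ y ∈ 𝒜 j, mu x y = sgn K i j • mu y x) ∧
  (∀ x y z : A, mu (mu x y) z = mu x (mu y z)) ∧
  (∀ i j, ∀ x ∈ 𝒜 i, ∀ y ∈ 𝒜 j, ∀ z : A,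
    br x (mu y z) = mu (br x y) z + sgn K i j • mu y (br x z))

/-- Poisson superalgebra axioms for parity-indexed operations. -/
def PoissonAxP {K A : Type} [Field K] [AddCommGroup A] [Module K A]
    (𝒜 : ZMod 2 → Submodule K A)
    (Br Mu : ZMod 2 → ZMod 2 → A → A → A) : Prop :=
  (∀ i j, ∀ x ∈ 𝒜 i, ∀ y ∈ 𝒜 j, Br i j x y = - (sgn K i j) • Br j i y x) ∧
  (∀ i j k, ∀ x ∈ 𝒜 i, ∀ y ∈ 𝒜 j, ∀ z ∈ 𝒜 k,
    sgn K i k • Br i (j+k) x (Br j k y z) + sgn K k j • Br k (i+j) z (Br i j x y)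
      + sgn K j i • Br j (k+i) y (Br k i z x) = 0) ∧
  (∀ i j, ∀ x ∈ 𝒜 i, ∀ y ∈ 𝒜 j, Mu i j x y = sgn K i j • Mu j i y x) ∧
  (∀ i j k, ∀ x ∈ 𝒜 i, ∀ y ∈ 𝒜 j, ∀ z ∈ 𝒜 k,
    Mu (i+j) k (Mu i j x y) z = Mu i (j+k) x (Mu j k y z)) ∧
  (∀ i j k, ∀ x ∈ 𝒜 i, ∀ y ∈ 𝒜 j, ∀ z ∈ 𝒜 k,
    Br i (j+k) x (Mu j k y z) = Mu (i+j) k (Br i j x y) z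
      + sgn K i j • Mu j (i+k) y (Br i k x z))

/-- Matched pair conditions for two Poisson superalgebras
`(A, br1, mu1)` and `(B, br2, mu2)` with mutual actions
`ρ1 φ1 : A → End(B)` and `ρ2 φ2 : B → End(A)`:
matched pair of Lie superalgebras, matched pair of commutative associative
superalgebras, the representation conditions of each Poisson superalgebra
on the other, and the four compatibility conditions. -/
def MatchedPairPoisson {K A B : Type} [Field K] [AddCommGroup A] [Module K A]
    [AddCommGroup B] [Module K B]
    (𝒜 : ZMod 2 → Submodule K A) (ℬ : ZMod 2 → Submodule K B)
    (br1 mu1 : A →ₗ[K] A →ₗ[K] A) (br2 mu2 : B →ₗ[K] B →ₗ[K] B)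
    (ρ1 φ1 : A →ₗ[K] B →ₗ[K] B) (ρ2 φ2 : B →ₗ[K] A →ₗ[K] A) : Prop :=
  -- ρ1, ρ2 are Lie superalgebra representations
  (∀ i j, ∀ x ∈ 𝒜 i, ∀ y ∈ 𝒜 j, ∀ a : B,
    ρ1 (br1 x y) a = ρ1 x (ρ1 y a) - sgn K i j • ρ1 y (ρ1 x a)) ∧
  (∀ i j, ∀ a ∈ ℬ i, ∀ b ∈ ℬ j, ∀ x : A,
    ρ2 (br2 a b) x = ρ2 a (ρ2 b x) - sgn K i j • ρ2 b (ρ2 a x)) ∧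
  -- matched pair of Lie superalgebras
  (∀ i j k, ∀ x ∈ 𝒜 i, ∀ y ∈ 𝒜 j, ∀ c ∈ ℬ k,
    ρ2 c (br1 x y) = br1 (ρ2 c x) y + sgn K i k • br1 x (ρ2 c y)
      + (sgn K i j * sgn K j k) • ρ2 (ρ1 y c) x - sgn K i k • ρ2 (ρ1 x c) y) ∧
  (∀ i j k, ∀ a ∈ ℬ i, ∀ b ∈ ℬ j, ∀ z ∈ 𝒜 k,
    ρ1 z (br2 a b) = br2 (ρ1 z a) b + sgn K i k • br2 a (ρ1 z b)
      + (sgn K i j * sgn K j k) • ρ1 (ρ2 b z) a - sgn K i k • ρ1 (ρ2 a z) b) ∧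
  -- φ1, φ2 are associative representations
  (∀ x y : A, ∀ b : B, φ1 (mu1 x y) b = φ1 x (φ1 y b)) ∧
  (∀ a b : B, ∀ y : A, φ2 (mu2 a b) y = φ2 a (φ2 b y)) ∧
  -- matched pair of commutative associative superalgebras
  (∀ i l, ∀ x ∈ 𝒜 i, ∀ a ∈ ℬ l, ∀ b : B,
    φ1 x (mu2 a b) = mu2 (φ1 x a) b + sgn K i l • φ1 (φ2 a x) b) ∧
  (∀ i l, ∀ x ∈ 𝒜 i, ∀ a ∈ ℬ l, ∀ y : A,
    φ2 a (mu1 x y) = mu1 (φ2 a x) y + sgn K i l • φ2 (φ1 x a) y) ∧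
  -- (B, ρ1, φ1) and (A, ρ2, φ2) are Poisson representations
  (∀ i j, ∀ x ∈ 𝒜 i, ∀ y ∈ 𝒜 j, ∀ a : B,
    ρ1 (mu1 x y) a = φ1 x (ρ1 y a) + sgn K i j • φ1 y (ρ1 x a)) ∧
  (∀ i j, ∀ x ∈ 𝒜 i, ∀ y ∈ 𝒜 j, ∀ a : B,
    φ1 (br1 x y) a = ρ1 x (φ1 y a) - sgn K i j • φ1 y (ρ1 x a)) ∧
  (∀ i j, ∀ a ∈ ℬ i, ∀ b ∈ ℬ j, ∀ x : A,
    ρ2 (mu2 a b) x = φ2 a (ρ2 b x) + sgn K i j • φ2 b (ρ2 a x)) ∧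
  (∀ i j, ∀ a ∈ ℬ i, ∀ b ∈ ℬ j, ∀ x : A,
    φ2 (br2 a b) x = ρ2 a (φ2 b x) - sgn K i j • φ2 b (ρ2 a x)) ∧
  -- compatibility condition (15)
  (∀ i j l, ∀ x ∈ 𝒜 i, ∀ y ∈ 𝒜 j, ∀ a ∈ ℬ l,
    ρ2 a (mu1 x y) = mu1 (ρ2 a x) y + sgn K l i • mu1 x (ρ2 a y)
      - sgn K l i • φ2 (ρ1 x a) y - (sgn K l j * sgn K i j) • φ2 (ρ1 y a) x) ∧
  -- compatibility condition (16)
  (∀ i j l, ∀ x ∈ 𝒜 i, ∀ y ∈ 𝒜 j, ∀ a ∈ ℬ l,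
    br1 x (φ2 a y) - (sgn K i l * sgn K i j * sgn K l j) • ρ2 (φ1 y a) x
      = φ2 (ρ1 x a) y - sgn K i l • mu1 (ρ2 a x) y + sgn K i l • φ2 a (br1 x y)) ∧
  -- compatibility condition (17)
  (∀ i l n, ∀ x ∈ 𝒜 i, ∀ a ∈ ℬ l, ∀ b ∈ ℬ n,
    ρ1 x (mu2 a b) = mu2 (ρ1 x a) b + sgn K i l • mu2 a (ρ1 x b)
      - sgn K i l • φ1 (ρ2 a x) b - (sgn K i n * sgn K l n) • φ1 (ρ2 b x) a) ∧
  -- compatibility condition (18)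
  (∀ i l n, ∀ x ∈ 𝒜 i, ∀ a ∈ ℬ l, ∀ b ∈ ℬ n,
    br2 a (φ1 x b) - (sgn K l i * sgn K l n * sgn K i n) • ρ1 (φ2 b x) a
      = φ1 (ρ2 a x) b - sgn K l i • mu2 (ρ1 x a) b + sgn K l i • φ1 x (br2 a b))


lemma zmod2cases (m : ZMod 2) : m = 0 ∨ m = 1 := by revert m; decide
@[simp] lemma zmod2add11 : (1 + 1 : ZMod 2) = 0 := by decide
@[simp] lemma sgn00 (K : Type) [Field K] : sgn K 0 0 = 1 := by simp [sgn]
@[simp] lemma sgn01 (K : Type) [Field K] : sgn K 0 1 = 1 := by simp [sgn]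
@[simp] lemma sgn10 (K : Type) [Field K] : sgn K 1 0 = 1 := by simp [sgn]
@[simp] lemma sgn11 (K : Type) [Field K] : sgn K 1 1 = -1 := by
  simp [sgn]; rw [ZMod.val_one]; ring

set_option maxHeartbeats 4000000 in
/-- a matched pair of Poisson superalgebras induces a Poisson
superalgebra structure on the direct sum `P1 ⊕ P2`. -/
theorem stmt_5 {K A B : Type} [Field K] [CharZero K]
    [AddCommGroup A] [Module K A] [AddCommGroup B] [Module K B]
    (𝒜 : ZMod 2 → Submodule K A) (ℬ : ZMod 2 → Submodule K B)
    (br1 mu1 : A →ₗ[K] A →ₗ[K] A) (br2 mu2 : B →ₗ[K] B →ₗ[K] B)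
    (h1 : PoissonAxB 𝒜 br1 mu1) (h2 : PoissonAxB ℬ br2 mu2)
    (ρ1 φ1 : A →ₗ[K] B →ₗ[K] B) (ρ2 φ2 : B →ₗ[K] A →ₗ[K] A)
    -- the four maps are even
    (hρ1even : ∀ i j, ∀ x ∈ 𝒜 i, ∀ a ∈ ℬ j, ρ1 x a ∈ ℬ (i+j))
    (hφ1even : ∀ i j, ∀ x ∈ 𝒜 i, ∀ a ∈ ℬ j, φ1 x a ∈ ℬ (i+j))
    (hρ2even : ∀ i j, ∀ a ∈ ℬ i, ∀ x ∈ 𝒜 j, ρ2 a x ∈ 𝒜 (i+j))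
    (hφ2even : ∀ i j, ∀ a ∈ ℬ i, ∀ x ∈ 𝒜 j, φ2 a x ∈ 𝒜 (i+j))
    (hmp : MatchedPairPoisson 𝒜 ℬ br1 mu1 br2 mu2 ρ1 φ1 ρ2 φ2) :
    PoissonAxP (fun i => (𝒜 i).prod (ℬ i))
      (fun i j p q =>
        (br1 p.1 q.1 + ρ2 p.2 q.1 - sgn K i j • ρ2 q.2 p.1,
         br2 p.2 q.2 + ρ1 p.1 q.2 - sgn K i j • ρ1 q.1 p.2))
      (fun i j p q =>
        (mu1 p.1 q.1 + φ2 p.2 q.1 + sgn K i j • φ2 q.2 p.1,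
         mu2 p.2 q.2 + φ1 p.1 q.2 + sgn K i j • φ1 q.1 p.2)) := by
  obtain ⟨-, -, anti1, jac1, comm1, assoc1, leib1⟩ := h1
  obtain ⟨-, -, anti2, jac2, comm2, assoc2, leib2⟩ := h2
  obtain ⟨rep1, rep2, mpl1, mpl2, arep1, arep2, mpa1, mpa2, prA1, prA2, prB1, prB2,
    c15, c16, c17, c18⟩ := hmp
  refine ⟨?_, ?_, ?_, ?_, ?_⟩
  · -- super skew-symmetry of the bracket
    intro i j p hp q hq
    rw [Submodule.mem_prod] at hp hq
    obtain ⟨x, a⟩ := p; obtain ⟨y, b⟩ := q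
    obtain ⟨hx, ha⟩ := hp; obtain ⟨hy, hb⟩ := hq
    dsimp only
    simp only [Prod.smul_mk, Prod.neg_mk, Prod.mk.injEq]
    constructor
    · linear_combination (norm := (match_scalars <;>
        (rcases zmod2cases i with rfl | rfl <;>
          rcases zmod2cases j with rfl | rfl <;>
          first
          | (simp; try ring1)
          | ring1)))
        anti1 i j x hx y hy
    · linear_combination (norm := (match_scalars <;>
        (rcases zmod2cases i with rfl | rfl <;>
          rcases zmod2cases j with rfl | rfl <;>
          first
          | (simp; try ring1)
          | ring1)))
        anti2 i j a ha b hb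
  · -- super Jacobi identity
    intro i j k p hp q hq r hr
    rw [Submodule.mem_prod] at hp hq hr
    obtain ⟨x, a⟩ := p; obtain ⟨y, b⟩ := q; obtain ⟨z, c⟩ := r
    obtain ⟨hx, ha⟩ := hp; obtain ⟨hy, hb⟩ := hq; obtain ⟨hz, hc⟩ := hr
    dsimp only
    simp only [Prod.smul_mk, Prod.mk_add_mk, Prod.mk_eq_zero]
    simp only [map_add, map_sub, map_smul, map_neg, LinearMap.add_apply, LinearMap.sub_apply,
      LinearMap.smul_apply, LinearMap.neg_apply]
    constructor
    · linear_combination (norm := (match_scalars <;>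
        (rcases zmod2cases i with rfl | rfl <;>
          rcases zmod2cases j with rfl | rfl <;>
          rcases zmod2cases k with rfl | rfl <;>
          first
          | (simp; try ring1)
          | ring1)))
        jac1 i j k x hx y hy z hz
        - sgn K i j • rep2 j k b hb c hc x
        - sgn K k i • rep2 i j a ha b hb z
        - sgn K j k • rep2 k i c hc a ha y
        + sgn K i k • mpl1 j k i y hy z hz a ha
        + sgn K k j • mpl1 i j k x hx y hy c hc
        + sgn K j i • mpl1 k i j z hz x hx b hb
        + sgn K i k • anti1 (i+j) k (ρ2 a y) (hρ2even i j a ha y hy) z hz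
        + sgn K k j • anti1 (k+i) j (ρ2 c x) (hρ2even k i c hc x hx) y hy
        + sgn K j i • anti1 (j+k) i (ρ2 b z) (hρ2even j k b hb z hz) x hx
    · linear_combination (norm := (match_scalars <;>
        (rcases zmod2cases i with rfl | rfl <;>
          rcases zmod2cases j with rfl | rfl <;>
          rcases zmod2cases k with rfl | rfl <;>
          first
          | (simp; try ring1)
          | ring1)))
        jac2 i j k a ha b hb c hc
        - sgn K i j • rep1 j k y hy z hz a
        - sgn K k i • rep1 i j x hx y hy c
        - sgn K j k • rep1 k i z hz x hx b
        + sgn K i k • mpl2 j k i b hb c hc x hx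
        + sgn K k j • mpl2 i j k a ha b hb z hz
        + sgn K j i • mpl2 k i j c hc a ha y hy
        + sgn K i k • anti2 (i+j) k (ρ1 x b) (hρ1even i j x hx b hb) c hc
        + sgn K k j • anti2 (k+i) j (ρ1 z a) (hρ1even k i z hz a ha) b hb
        + sgn K j i • anti2 (j+k) i (ρ1 y c) (hρ1even j k y hy c hc) a ha
  · -- super commutativity of the product
    intro i j p hp q hq
    rw [Submodule.mem_prod] at hp hq
    obtain ⟨x, a⟩ := p; obtain ⟨y, b⟩ := q
    obtain ⟨hx, ha⟩ := hp; obtain ⟨hy, hb⟩ := hq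
    dsimp only
    simp only [Prod.smul_mk, Prod.mk.injEq]
    constructor
    · linear_combination (norm := (match_scalars <;>
        (rcases zmod2cases i with rfl | rfl <;>
          rcases zmod2cases j with rfl | rfl <;>
          first
          | (simp; try ring1)
          | ring1)))
        comm1 i j x hx y hy
    · linear_combination (norm := (match_scalars <;>
        (rcases zmod2cases i with rfl | rfl <;>
          rcases zmod2cases j with rfl | rfl <;>
          first
          | (simp; try ring1)
          | ring1)))
        comm2 i j a ha b hb
  · -- associativity of the product
    intro i j k p hp q hq r hr
    rw [Submodule.mem_prod] at hp hq hr
    obtain ⟨x, a⟩ := p; obtain ⟨y, b⟩ := q; obtain ⟨z, c⟩ := r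
    obtain ⟨hx, ha⟩ := hp; obtain ⟨hy, hb⟩ := hq; obtain ⟨hz, hc⟩ := hr
    dsimp only
    simp only [Prod.smul_mk, Prod.mk_add_mk, Prod.mk.injEq]
    simp only [map_add, map_sub, map_smul, map_neg, LinearMap.add_apply, LinearMap.sub_apply,
      LinearMap.smul_apply, LinearMap.neg_apply]
    have hb1 : φ2 b (mu1 x z) = sgn K i k • φ2 b (mu1 z x) := by
      rw [comm1 i k x hx z hz, map_smul]
    have hca : φ2 c (φ2 a y) = sgn K k i • φ2 a (φ2 c y) := by
      rw [← arep2, comm2 k i c hc a ha, map_smul, LinearMap.smul_apply, arep2]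
    have hcb : φ2 c (φ2 b x) = sgn K k j • φ2 (mu2 b c) x := by
      rw [← arep2, comm2 k j c hc b hb, map_smul, LinearMap.smul_apply]
    have hc1 : φ2 c (mu1 x y) = sgn K i j • φ2 c (mu1 y x) := by
      rw [comm1 i j x hx y hy, map_smul]
    have hb1' : φ1 y (mu2 a c) = sgn K i k • φ1 y (mu2 c a) := by
      rw [comm2 i k a ha c hc, map_smul]
    have hca' : φ1 z (φ1 x b) = sgn K k i • φ1 x (φ1 z b) := by
      rw [← arep1, comm1 k i z hz x hx, map_smul, LinearMap.smul_apply, arep1]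
    have hcb' : φ1 z (φ1 y a) = sgn K k j • φ1 (mu1 y z) a := by
      rw [← arep1, comm1 k j z hz y hy, map_smul, LinearMap.smul_apply]
    have hc1' : φ1 z (mu2 a b) = sgn K i j • φ1 z (mu2 b a) := by
      rw [comm2 i j a ha b hb, map_smul]
    constructor
    · linear_combination (norm := (match_scalars <;>
        (rcases zmod2cases i with rfl | rfl <;>
          rcases zmod2cases j with rfl | rfl <;>
          rcases zmod2cases k with rfl | rfl <;>
          first
          | (simp; try ring1)
          | ring1)))
        assoc1 x y z
        - mpa2 j i y hy a ha z
        + arep2 a b z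
        - sgn K i j • mpa2 i j x hx b hb z
        + sgn K i j • hb1
        + (sgn K i j * sgn K i k) • mpa2 k j z hz b hb x
        + (sgn K i j * sgn K i k) • comm1 (j+k) i (φ2 b z) (hφ2even j k b hb z hz) x hx
        + (sgn K i k * sgn K j k) • hca
        + (sgn K i k * sgn K j k * sgn K i j) • hcb
        + (sgn K i k * sgn K j k) • hc1
        + (sgn K i k * sgn K j k * sgn K i j) • mpa2 j k y hy c hc x
        + (sgn K i k * sgn K j k * sgn K i j) • comm1 (k+j) i (φ2 c y) (hφ2even k j c hc y hy) x hx
    · linear_combination (norm := (match_scalars <;>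
        (rcases zmod2cases i with rfl | rfl <;>
          rcases zmod2cases j with rfl | rfl <;>
          rcases zmod2cases k with rfl | rfl <;>
          first
          | (simp; try ring1)
          | ring1)))
        assoc2 a b c
        - mpa1 i j x hx b hb c
        + arep1 x y c
        - sgn K i j • mpa1 j i y hy a ha c
        + sgn K i j • hb1'
        + (sgn K i j * sgn K i k) • mpa1 j k y hy c hc a
        + (sgn K i j * sgn K i k) • comm2 (j+k) i (φ1 y c) (hφ1even j k y hy c hc) a ha
        + (sgn K i k * sgn K j k) • hca'
        + (sgn K i k * sgn K j k * sgn K i j) • hcb'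
        + (sgn K i k * sgn K j k) • hc1'
        + (sgn K i k * sgn K j k * sgn K i j) • mpa1 k j z hz b hb a
        + (sgn K i k * sgn K j k * sgn K i j) • comm2 (k+j) i (φ1 z b) (hφ1even k j z hz b hb) a ha
  · -- super Leibniz rule
    intro i j k p hp q hq r hr
    rw [Submodule.mem_prod] at hp hq hr
    obtain ⟨x, a⟩ := p; obtain ⟨y, b⟩ := q; obtain ⟨z, c⟩ := r
    obtain ⟨hx, ha⟩ := hp; obtain ⟨hy, hb⟩ := hq; obtain ⟨hz, hc⟩ := hr
    dsimp only
    simp only [Prod.smul_mk, Prod.mk_add_mk, Prod.mk.injEq]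
    simp only [map_add, map_sub, map_smul, map_neg, LinearMap.add_apply, LinearMap.sub_apply,
      LinearMap.smul_apply, LinearMap.neg_apply]
    constructor
    · linear_combination (norm := (match_scalars <;>
        (rcases zmod2cases i with rfl | rfl <;>
          rcases zmod2cases j with rfl | rfl <;>
          rcases zmod2cases k with rfl | rfl <;>
          first
          | (simp; try ring1)
          | ring1)))
        leib1 i j x hx y hy z
        + c15 j k i y hy z hz a ha
        - (sgn K i j * sgn K i k) • prB1 j k b hb c hc x
        + c16 i k j x hx z hz b hb
        + sgn K j k • c16 i j k x hx y hy c hc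
        + (sgn K i j * sgn K i k) • comm1 j (k+i) y hy (ρ2 c x) (hρ2even k i c hc x hx)
        - prB2 i j a ha b hb z
        - sgn K j k • prB2 i k a ha c hc y
    · linear_combination (norm := (match_scalars <;>
        (rcases zmod2cases i with rfl | rfl <;>
          rcases zmod2cases j with rfl | rfl <;>
          rcases zmod2cases k with rfl | rfl <;>
          first
          | (simp; try ring1)
          | ring1)))
        leib2 i j a ha b hb c
        + c17 i j k x hx b hb c hc
        - (sgn K i j * sgn K i k) • prA1 j k y hy z hz a
        + c18 j i k y hy a ha c hc
        + sgn K j k • c18 k i j z hz a ha b hb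
        + (sgn K i j * sgn K i k) • comm2 j (k+i) b hb (ρ1 z a) (hρ1even k i z hz a ha)
        - prA2 i j x hx y hy c
        - sgn K j k • prA2 i k x hx z hz b
end

section
/- Let (A, {,}) be a Lie superalgebra and T: A → A a Rota-Baxter operator of weight λ on (A,{,}), i.e. {T(u),T(v)} = T({T(u),v} + {u,T(v)} + λ{u,v}). Then the operations [u,v] = λ{u,v} and u⋄v = {T(u),v} make A a left post-Lie superalgebra. -/
/-- Axioms of a (left) post-Lie superalgebra with operations `lb` and `dm = ⋄`. -/
def PostLieAx {K A : Type} [Field K] [AddCommGroup A] [Module K A]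
    (𝒜 : ZMod 2 → Submodule K A) (lb dm : A → A → A) : Prop :=
  (∀ i j, ∀ x ∈ 𝒜 i, ∀ y ∈ 𝒜 j, lb x y = - (sgn K i j) • lb y x) ∧
  (∀ i j k, ∀ x ∈ 𝒜 i, ∀ y ∈ 𝒜 j, ∀ z ∈ 𝒜 k,
    sgn K i k • lb x (lb y z) + sgn K k j • lb z (lb x y)
      + sgn K j i • lb y (lb z x) = 0) ∧
  (∀ i j k, ∀ x ∈ 𝒜 i, ∀ y ∈ 𝒜 j, ∀ z ∈ 𝒜 k,
    sgn K k j • dm z (dm y x) - dm y (dm z x) + dm (dm y z) x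
      - sgn K k j • dm (dm z y) x + dm (lb y z) x = 0) ∧
  (∀ i j k, ∀ x ∈ 𝒜 i, ∀ y ∈ 𝒜 j, ∀ z ∈ 𝒜 k,
    dm z (lb x y) = lb (dm z x) y + sgn K k i • lb x (dm z y))

private lemma val2' : (2 : ZMod 2).val = 0 := rfl

/-- a Rota-Baxter operator of weight `λ` on a Lie superalgebra
yields a left post-Lie superalgebra with `[u,v] = λ{u,v}` and `u⋄v = {T(u),v}`. -/
theorem stmt_14 {K A : Type} [Field K] [CharZero K]
    [AddCommGroup A] [Module K A]
    (𝒜 : ZMod 2 → Submodule K A) (br : A →ₗ[K] A →ₗ[K] A)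
    -- (A, br) is a Lie superalgebra
    (hgrade : ∀ i j, ∀ x ∈ 𝒜 i, ∀ y ∈ 𝒜 j, br x y ∈ 𝒜 (i+j))
    (hskew : ∀ i j, ∀ x ∈ 𝒜 i, ∀ y ∈ 𝒜 j, br x y = - (sgn K i j) • br y x)
    (hjac : ∀ i j k, ∀ x ∈ 𝒜 i, ∀ y ∈ 𝒜 j, ∀ z ∈ 𝒜 k,
      sgn K i k • br x (br y z) + sgn K k j • br z (br x y)
        + sgn K j i • br y (br z x) = 0)
    (lam : K) (T : A →ₗ[K] A)
    (hTeven : ∀ i, ∀ x ∈ 𝒜 i, T x ∈ 𝒜 i)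
    -- Rota-Baxter operator of weight λ
    (hRB : ∀ u v : A, br (T u) (T v) = T (br (T u) v + br u (T v) + lam • br u v)) :
    PostLieAx 𝒜 (fun u v => lam • br u v) (fun u v => br (T u) v) := by
  refine ⟨?_, ?_, ?_, ?_⟩
  · -- skew-symmetry of lb
    intro i j x hx y hy
    simp only
    rw [hskew i j x hx y hy]
    module
  · -- super Jacobi for lb
    intro i j k x hx y hy z hz
    simp only [map_smul, LinearMap.smul_apply]
    have J := hjac i j k x hx y hy z hz
    linear_combination (norm := module) (lam * lam) • J
  · -- the post-Lie identity
    intro i j k x hx y hy z hz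
    simp only [map_smul, LinearMap.smul_apply]
    have hTy := hTeven j y hy
    have hTz := hTeven k z hz
    -- Rota-Baxter processed
    have h := hRB y z
    have h' : br (br (T y) (T z)) x
        = br (T (br (T y) z)) x + br (T (br y (T z))) x
          + lam • br (T (br y z)) x := by
      rw [h]; simp [map_add, map_smul]
    have S : br y (T z) = - (sgn K j k) • br (T z) y := hskew j k y hy (T z) hTz
    have S' : br (T (br y (T z))) x
        = - (sgn K j k) • br (T (br (T z) y)) x := by
      rw [S]; simp [map_smul]
    have J2 := hjac i j k x hx (T y) hTy (T z) hTz
    have S3 : br x (T y) = - (sgn K i j) • br (T y) x := hskew i j x hx (T y) hTy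
    have S3' : br (T z) (br x (T y)) = - (sgn K i j) • br (T z) (br (T y) x) := by
      rw [S3]; simp [map_smul]
    have S4 : br (br (T y) (T z)) x
        = - (sgn K (j+k) i) • br x (br (T y) (T z)) :=
      hskew (j+k) i _ (hgrade j k _ hTy _ hTz) x hx
    linear_combination (norm :=
        (match_scalars <;> simp -failIfUnchanged only [sgn, ZMod.val_add] <;> fin_cases i <;> fin_cases j <;> fin_cases k <;>
          norm_num [sgn, ZMod.val_one, ZMod.val_zero, val2', ZMod.val]))
      (-1 : K) • h' + (-1 : K) • S' + (-(sgn K j i)) • J2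
        + (sgn K k j * sgn K i j) • S3' + S4
  · -- derivation property
    intro i j k x hx y hy z hz
    simp only [map_smul]
    have hTz := hTeven k z hz
    have J3 := hjac i j k x hx y hy (T z) hTz
    have S5 : br y (T z) = - (sgn K j k) • br (T z) y := hskew j k y hy (T z) hTz
    have S5' : br x (br y (T z)) = - (sgn K j k) • br x (br (T z) y) := by
      rw [S5]; simp [map_smul]
    have S6 : br (br (T z) x) y = - (sgn K (k+i) j) • br y (br (T z) x) :=
      hskew (k+i) j _ (hgrade k i _ hTz x hx) y hy
    linear_combination (norm :=
        (match_scalars <;> simp -failIfUnchanged only [sgn, ZMod.val_add] <;> fin_cases i <;> fin_cases j <;> fin_cases k <;>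
          norm_num [sgn, ZMod.val_one, ZMod.val_zero, val2', ZMod.val]))
      (lam * sgn K k j) • J3 + (-(lam * sgn K k j * sgn K i k)) • S5'
        + (-lam) • S6
end

section
/- Let (A, ∙) be a commutative associative superalgebra and T: A → A a Rota-Baxter operator of weight λ, i.e. T(u)∙T(v) = T(T(u)∙v + u∙T(v) + λ u∙v). Then the operations u·v = λ u∙v and u≻v = T(u)∙v make A a left commutative dendriform supertrialgebra. -/
/-- Axioms of a (left) commutative dendriform supertrialgebra with operations
`cd = ·` and `sc = ≻`. -/
def CommTridendAx {K A : Type} [Field K] [AddCommGroup A] [Module K A]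
    (𝒜 : ZMod 2 → Submodule K A) (cd sc : A → A → A) : Prop :=
  (∀ i j, ∀ x ∈ 𝒜 i, ∀ y ∈ 𝒜 j, cd x y = sgn K i j • cd y x) ∧
  (∀ x y z : A, cd (cd x y) z = cd x (cd y z)) ∧
  (∀ i j, ∀ x ∈ 𝒜 i, ∀ y ∈ 𝒜 j, ∀ z : A,
    sc x (sc y z) = sc (sc x y + sgn K i j • sc y x + cd x y) z) ∧
  (∀ x y z : A, cd (sc x y) z = sc x (cd y z))

/-- a Rota-Baxter operator of weight `λ` on a commutative
associative superalgebra yields a left commutative dendriform supertrialgebra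
with `u·v = λ u∙v` and `u≻v = T(u)∙v`. -/
theorem stmt_15 {K A : Type} [Field K] [CharZero K]
    [AddCommGroup A] [Module K A]
    (𝒜 : ZMod 2 → Submodule K A) (mu : A →ₗ[K] A →ₗ[K] A)
    -- (A, mu) is a commutative associative superalgebra
    (hgrade : ∀ i j, ∀ x ∈ 𝒜 i, ∀ y ∈ 𝒜 j, mu x y ∈ 𝒜 (i+j))
    (hcomm : ∀ i j, ∀ x ∈ 𝒜 i, ∀ y ∈ 𝒜 j, mu x y = sgn K i j • mu y x)
    (hassoc : ∀ x y z : A, mu (mu x y) z = mu x (mu y z))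
    (lam : K) (T : A →ₗ[K] A)
    (hTeven : ∀ i, ∀ x ∈ 𝒜 i, T x ∈ 𝒜 i)
    -- Rota-Baxter operator of weight λ
    (hRB : ∀ u v : A, mu (T u) (T v) = T (mu (T u) v + mu u (T v) + lam • mu u v)) :
    CommTridendAx 𝒜 (fun u v => lam • mu u v) (fun u v => mu (T u) v) := by
  refine ⟨?_, ?_, ?_, ?_⟩
  · intro i j x hx y hy
    show lam • mu x y = sgn K i j • lam • mu y x
    rw [hcomm i j x hx y hy, smul_comm]
  · intro x y z
    simp only [map_smul, LinearMap.smul_apply, hassoc]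
  · intro i j x hx y hy z
    show mu (T x) (mu (T y) z) = mu (T (mu (T x) y + sgn K i j • mu (T y) x + lam • mu x y)) z
    rw [← hassoc, hRB]
    congr 3
    have hc : mu x (T y) = sgn K i j • mu (T y) x :=
      hcomm i j x hx (T y) (hTeven j y hy)
    simp [hc, map_add, map_smul]
  · intro x y z
    simp only [map_smul, LinearMap.smul_apply, hassoc]
end

section
/- Ungraded specialization: let A be a (purely even) algebra over a field of characteristic 0 with bilinear product x·y satisfying 3((x·y)·z - x·(y·z)) = (x·z)·y - (z·x)·y + (y·z)·x - (y·x)·z for all x,y,z. Then with {x,y} = (1/2)(x·y - y·x) and x∙y = (1/2)(x·y + y·x), (A, {,}, ∙) is a Poisson algebra: {,} is a Lie bracket, ∙ is commutative associative, and {x, y∙z} = {x,y}∙z + y∙{x,z}. -/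
/-- ungraded specialization of the Poisson-admissible identity. -/
theorem stmt_18 {K A : Type} [Field K] [CharZero K]
    [AddCommGroup A] [Module K A]
    (m : A →ₗ[K] A →ₗ[K] A)
    (h : ∀ x y z : A, (3 : K) • (m (m x y) z - m x (m y z)) =
        m (m x z) y - m (m z x) y + m (m y z) x - m (m y x) z) :
    let br : A → A → A := fun x y => (2⁻¹ : K) • (m x y - m y x)
    let bu : A → A → A := fun x y => (2⁻¹ : K) • (m x y + m y x)
    (∀ x y : A, br x y = - br y x) ∧
    (∀ x y z : A, br x (br y z) + br z (br x y) + br y (br z x) = 0) ∧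
    (∀ x y : A, bu x y = bu y x) ∧
    (∀ x y z : A, bu (bu x y) z = bu x (bu y z)) ∧
    (∀ x y z : A, br x (bu y z) = bu (br x y) z + bu y (br x z)) := by
  intro br bu
  have hbr : ∀ x y : A, br x y = (2⁻¹ : K) • (m x y - m y x) := fun _ _ => rfl
  have hbu : ∀ x y : A, bu x y = (2⁻¹ : K) • (m x y + m y x) := fun _ _ => rfl
  refine ⟨?_, ?_, ?_, ?_, ?_⟩
  · intro x y
    simp only [hbr]
    module
  · intro x y z
    simp only [hbr, map_smul, map_sub, LinearMap.smul_apply, LinearMap.sub_apply,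
      smul_sub]
    linear_combination (norm := module)
      (-(12:K)⁻¹) • h x y z + ((12:K)⁻¹) • h x z y + ((12:K)⁻¹) • h y x z +
      (-(12:K)⁻¹) • h y z x + (-(12:K)⁻¹) • h z x y + ((12:K)⁻¹) • h z y x
  · intro x y
    simp only [hbu]
    module
  · intro x y z
    simp only [hbu, map_smul, map_add, LinearMap.smul_apply, LinearMap.add_apply,
      smul_add]
    linear_combination (norm := module)
      ((12:K)⁻¹) • h x y z + ((12:K)⁻¹) • h x z y +
      (-(12:K)⁻¹) • h z x y + (-(12:K)⁻¹) • h z y x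
  · intro x y z
    simp only [hbr, hbu, map_smul, map_add, map_sub, LinearMap.smul_apply,
      LinearMap.add_apply, LinearMap.sub_apply, smul_add, smul_sub]
    linear_combination (norm := module)
      (-(12:K)⁻¹) • h x y z + (-(12:K)⁻¹) • h x z y + ((12:K)⁻¹) • h y x z +
      (-(12:K)⁻¹) • h y z x + ((12:K)⁻¹) • h z x y + (-(12:K)⁻¹) • h z y x
end
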